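/- The subgroup {(a, b√3; c√3, d) ∈ G : c ≡ 0 (mod 3)} of SL(2,ℝ) is generated by the four matrices −I, A₁ = (1, √3; 0, 1), A₂ = (−5, 4√3; −3√3, 7) and A₃ = (−2, √3; −3√3, 4). -/

import Mathlib

/-! The generators have lower-left entries divisible by `3√3`. Conversely, descend on `|c|` for
`A = (a, b√3; c√3, d)` with `3 ∣ c`: left multiplication by an element of the closure with bottom
row `(3√3, -n)` replaces `c` by `3a - nc`, and since `a` is prime to `c`, some `n` prime to `3`
gives `|3a - nc| < |c|`. Such elements exist for every `n` prime to `3`: `±A₂^{±1}`, `±A₃^{±1}`,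
`±(A₃A₂)^{±1}` realise the six residues of `n` mod `9`, and right multiplication by `A₁^k` shifts
`n` by `9k`. When `c = 0`, `A = ±A₁^{±b}`. -/

/-- The subgroup of `SL(2, ℝ)` of matrices of the form `(a, b√3; c√3, d)` with
`a, b, c, d ∈ ℤ`, `ad − 3bc = 1` and `m ∣ c`. -/
def sqrt3Group (m : ℤ) : Subgroup (Matrix.SpecialLinearGroup (Fin 2) ℝ) where
  carrier := {A | ∃ a b c d : ℤ, (A : Matrix (Fin 2) (Fin 2) ℝ) =
      !![(a:ℝ), (b:ℝ) * Real.sqrt 3; (c:ℝ) * Real.sqrt 3, (d:ℝ)] ∧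
      a * d - 3 * b * c = 1 ∧ m ∣ c}
  one_mem' := by
    refine ⟨1, 0, 0, 1, ?_, by ring, dvd_zero m⟩
    rw [Matrix.SpecialLinearGroup.coe_one, Matrix.one_fin_two]
    norm_num
  mul_mem' := by
    rintro A B ⟨a₁, b₁, c₁, d₁, hA, hdA, hcA⟩ ⟨a₂, b₂, c₂, d₂, hB, hdB, hcB⟩
    have h3 : Real.sqrt 3 * Real.sqrt 3 = 3 := Real.mul_self_sqrt (by norm_num)
    refine ⟨a₁ * a₂ + 3 * b₁ * c₂, a₁ * b₂ + b₁ * d₂, c₁ * a₂ + d₁ * c₂,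
      3 * c₁ * b₂ + d₁ * d₂, ?_, ?_, ?_⟩
    · rw [Matrix.SpecialLinearGroup.coe_mul, hA, hB, Matrix.mul_fin_two]
      ext i j
      fin_cases i <;> fin_cases j <;> push_cast <;> simp
      · linear_combination ((b₁ : ℝ) * (c₂ : ℝ)) * h3
      · ring
      · ring
      · linear_combination ((c₁ : ℝ) * (b₂ : ℝ)) * h3
    · linear_combination (a₂ * d₂ - 3 * b₂ * c₂) * hdA + hdB
    · exact dvd_add (hcA.mul_right _) (hcB.mul_left _)
  inv_mem' := by
    rintro A ⟨a, b, c, d, hA, hdA, hcA⟩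
    refine ⟨d, -b, -c, a, ?_, by linear_combination hdA, dvd_neg.mpr hcA⟩
    rw [Matrix.SpecialLinearGroup.coe_inv, hA, Matrix.adjugate_fin_two]
    ext i j
    fin_cases i <;> fin_cases j <;> push_cast <;> simp


theorem Int.exists_not_dvd_abs_mul_sub_mul_lt {m a c : ℤ} (hm : ¬IsUnit m) (hac : IsCoprime a c)
    (hmc : m ∣ c) (hc : c ≠ 0) : ∃ n, ¬m ∣ n ∧ |m * a - n * c| < |c| := by
  wlog hc_pos : 0 < c generalizing a c
  · obtain ⟨n, hn, hlt⟩ := this hac.neg_neg (dvd_neg.2 hmc) (neg_ne_zero.2 hc) (by omega)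
    refine ⟨n, hn, ?_⟩
    rwa [show m * -a - n * -c = -(m * a - n * c) by ring, abs_neg, abs_neg] at hlt
  obtain ⟨q, r, hqr, hr0, hrc⟩ : ∃ q r, m * a = q * c + r ∧ 0 ≤ r ∧ r < c :=
    ⟨m * a / c, m * a % c, (Int.ediv_mul_add_emod _ _).symm, Int.emod_nonneg _ hc,
      Int.emod_lt_of_pos _ hc_pos⟩
  rw [abs_of_pos hc_pos]
  by_cases hq : m ∣ q
  · have hr : 0 < r := by
      refine hr0.lt_of_ne' ?_
      rintro rfl
      obtain ⟨q', rfl⟩ := hq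
      have hm0 : m ≠ 0 := by rintro rfl; exact hc (zero_dvd_iff.1 hmc)
      have hca : c ∣ a := ⟨q', mul_left_cancel₀ hm0 (by linear_combination hqr)⟩
      exact hm (isUnit_of_dvd_unit hmc (hac.isUnit_of_dvd' hca dvd_rfl))
    refine ⟨q + 1, fun h => hm (isUnit_of_dvd_one ((dvd_add_right hq).1 h)), ?_⟩
    rw [abs_lt]
    constructor <;> linarith
  · exact ⟨q, hq, by rw [abs_lt]; constructor <;> linarith⟩

open Subgroup
open scoped MatrixGroups

noncomputable def sqrt3SL (a b c d : ℤ) (h : a * d - 3 * b * c = 1) : SL(2, ℝ) :=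
  ⟨!![(a:ℝ), (b:ℝ) * Real.sqrt 3; (c:ℝ) * Real.sqrt 3, (d:ℝ)], by
    have h3 : Real.sqrt 3 * Real.sqrt 3 = 3 := Real.mul_self_sqrt (by norm_num)
    rw [Matrix.det_fin_two_of]
    linear_combination -(b * c : ℝ) * h3 + (by exact_mod_cast h : (a * d - 3 * b * c : ℝ) = 1)⟩

theorem sqrt3SL_congr {a b c d a' b' c' d' : ℤ} {h : a * d - 3 * b * c = 1}
    {h' : a' * d' - 3 * b' * c' = 1} (ha : a = a') (hb : b = b') (hc : c = c') (hd : d = d') :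
    sqrt3SL a b c d h = sqrt3SL a' b' c' d' h' := by
  subst ha hb hc hd; rfl

theorem sqrt3SL_mul {a b c d a' b' c' d' : ℤ} (h : a * d - 3 * b * c = 1)
    (h' : a' * d' - 3 * b' * c' = 1) :
    sqrt3SL a b c d h * sqrt3SL a' b' c' d' h' =
      sqrt3SL (a * a' + 3 * b * c') (a * b' + b * d') (c * a' + d * c') (3 * c * b' + d * d')
        (by linear_combination (a' * d' - 3 * b' * c') * h + h') := by
  have h3 : Real.sqrt 3 * Real.sqrt 3 = 3 := Real.mul_self_sqrt (by norm_num)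
  refine Matrix.SpecialLinearGroup.ext _ _ ?_
  intro i j
  rw [Matrix.SpecialLinearGroup.coe_mul]
  fin_cases i <;> fin_cases j <;> simp [sqrt3SL]
  · linear_combination (b * c' : ℝ) * h3
  · ring
  · ring
  · linear_combination (c * b' : ℝ) * h3

theorem sqrt3SL_inv {a b c d : ℤ} (h : a * d - 3 * b * c = 1) :
    (sqrt3SL a b c d h)⁻¹ = sqrt3SL d (-b) (-c) a (by linear_combination h) := by
  refine Matrix.SpecialLinearGroup.ext _ _ ?_
  intro i j
  rw [Matrix.SpecialLinearGroup.coe_inv]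
  fin_cases i <;> fin_cases j <;> simp [sqrt3SL, Matrix.adjugate_fin_two]

theorem neg_one_eq_sqrt3SL : (-1 : SL(2, ℝ)) = sqrt3SL (-1) 0 0 (-1) (by norm_num) := by
  ext i j
  fin_cases i <;> fin_cases j <;> simp [sqrt3SL]

theorem mem_sqrt3Group_iff {m : ℤ} {A : SL(2, ℝ)} :
    A ∈ sqrt3Group m ↔ ∃ a b c d h, sqrt3SL a b c d h = A ∧ m ∣ c := by
  constructor
  · rintro ⟨a, b, c, d, hA, h, hc⟩
    exact ⟨a, b, c, d, h, Subtype.ext hA.symm, hc⟩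
  · rintro ⟨a, b, c, d, h, rfl, hc⟩
    exact ⟨a, b, c, d, rfl, h, hc⟩

namespace Sqrt3Group

noncomputable def A₁ : SL(2, ℝ) := sqrt3SL 1 1 0 1 (by norm_num)
noncomputable def A₂ : SL(2, ℝ) := sqrt3SL (-5) 4 (-3) 7 (by norm_num)
noncomputable def A₃ : SL(2, ℝ) := sqrt3SL (-2) 1 (-3) 4 (by norm_num)

local notation "Γ" => Subgroup.closure ({-1, A₁, A₂, A₃} : Set SL(2, ℝ))

theorem A₁_zpow (k : ℤ) : A₁ ^ k = sqrt3SL 1 k 0 1 (by ring) := by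
  induction k using Int.induction_on with
  | zero =>
    ext i j
    fin_cases i <;> fin_cases j <;> simp [sqrt3SL]
  | succ k ih =>
    rw [zpow_add_one, ih, A₁, sqrt3SL_mul]
    exact sqrt3SL_congr (by ring) (by ring) (by ring) (by ring)
  | pred k ih =>
    rw [zpow_sub_one, ih, A₁, sqrt3SL_inv, sqrt3SL_mul]
    exact sqrt3SL_congr (by ring) (by ring) (by ring) (by ring)

theorem closure_le_sqrt3Group_three : Γ ≤ sqrt3Group 3 := by
  simp only [closure_le, Set.insert_subset_iff, Set.singleton_subset_iff, SetLike.mem_coe,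
    neg_one_eq_sqrt3SL, A₁, A₂, A₃, mem_sqrt3Group_iff]
  exact ⟨⟨_, _, _, _, _, rfl, by norm_num⟩, ⟨_, _, _, _, _, rfl, by norm_num⟩,
    ⟨_, _, _, _, _, rfl, by norm_num⟩, ⟨_, _, _, _, _, rfl, by norm_num⟩⟩

theorem exists_sqrt3SL_mem_closure_of_not_dvd {n : ℤ} (hn : ¬3 ∣ n) :
    ∃ p q h, sqrt3SL p q 3 (-n) h ∈ Γ := by
  have hneg : (-1 : SL(2, ℝ)) ∈ Γ := subset_closure (by simp)
  have h₁ : A₁ ∈ Γ := subset_closure (by simp)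
  have h₂ : A₂ ∈ Γ := subset_closure (by simp)
  have h₃ : A₃ ∈ Γ := subset_closure (by simp)
  obtain ⟨n₀, ⟨k, hk⟩, p, q, h, hmem⟩ :
      ∃ n₀, 9 ∣ n - n₀ ∧ ∃ p q h, sqrt3SL p q 3 (-n₀) h ∈ Γ := by
    have : n % 9 = 1 ∨ n % 9 = 2 ∨ n % 9 = 4 ∨ n % 9 = 5 ∨ n % 9 = 7 ∨ n % 9 = 8 := by omega
    rcases this with h | h | h | h | h | h
    · refine ⟨1, by omega, 8, -1, by norm_num, ?_⟩
      convert mul_mem hneg (inv_mem (mul_mem h₃ h₂)) using 1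
      simp only [neg_one_eq_sqrt3SL, A₂, A₃, sqrt3SL_mul, sqrt3SL_inv]
      norm_num
    · refine ⟨2, by omega, 4, -1, by norm_num, ?_⟩
      convert inv_mem h₃ using 1
      simp only [A₃, sqrt3SL_inv]
      norm_num
    · refine ⟨4, by omega, 2, -1, by norm_num, ?_⟩
      convert mul_mem hneg h₃ using 1
      simp only [neg_one_eq_sqrt3SL, A₃, sqrt3SL_mul]
      norm_num
    · refine ⟨5, by omega, 7, -4, by norm_num, ?_⟩
      convert inv_mem h₂ using 1
      simp only [A₂, sqrt3SL_inv]
      norm_num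
    · refine ⟨7, by omega, 5, -4, by norm_num, ?_⟩
      convert mul_mem hneg h₂ using 1
      simp only [neg_one_eq_sqrt3SL, A₂, sqrt3SL_mul]
      norm_num
    · refine ⟨8, by omega, 1, -1, by norm_num, ?_⟩
      convert mul_mem h₃ h₂ using 1
      simp only [A₂, A₃, sqrt3SL_mul]
      norm_num
  refine ⟨p, q - p * k, by linear_combination h - p * hk, ?_⟩
  convert mul_mem hmem (zpow_mem h₁ (-k)) using 1
  rw [A₁_zpow, sqrt3SL_mul]
  exact sqrt3SL_congr (by ring) (by ring) (by ring) (by linear_combination -hk)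

theorem sqrt3SL_mem_closure {a b c d : ℤ} (h : a * d - 3 * b * c = 1) (hc : 3 ∣ c) :
    sqrt3SL a b c d h ∈ Γ := by
  have hneg : (-1 : SL(2, ℝ)) ∈ Γ := subset_closure (by simp)
  have h₁ : A₁ ∈ Γ := subset_closure (by simp)
  rcases eq_or_ne c 0 with rfl | hc0
  · rcases Int.eq_one_or_neg_one_of_mul_eq_one' (by linear_combination h : a * d = 1) with
      ⟨rfl, rfl⟩ | ⟨rfl, rfl⟩
    · rw [show sqrt3SL 1 b 0 1 h = A₁ ^ b by rw [A₁_zpow]]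
      exact zpow_mem h₁ b
    · rw [show sqrt3SL (-1) b 0 (-1) h = -1 * A₁ ^ (-b) by
        rw [A₁_zpow, neg_one_eq_sqrt3SL, sqrt3SL_mul]
        exact sqrt3SL_congr (by ring) (by ring) (by ring) (by ring)]
      exact mul_mem hneg (zpow_mem h₁ _)
  · obtain ⟨n, hn, hlt⟩ := Int.exists_not_dvd_abs_mul_sub_mul_lt (a := a)
      (by norm_num [Int.isUnit_iff]) ⟨d, -3 * b, by linear_combination h⟩ hc hc0
    obtain ⟨p, q, hW, hWmem⟩ := exists_sqrt3SL_mem_closure_of_not_dvd hn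
    have hlt' : (3 * a - n * c).natAbs < c.natAbs := by
      rw [← Int.ofNat_lt, Int.natCast_natAbs, Int.natCast_natAbs]
      exact hlt
    have hWA : sqrt3SL p q 3 (-n) hW * sqrt3SL a b c d h ∈ Γ := by
      rw [sqrt3SL_mul]
      exact sqrt3SL_mem_closure _ (dvd_add (dvd_mul_right 3 a) (dvd_mul_of_dvd_right hc _))
    simpa using mul_mem (inv_mem hWmem) hWA
termination_by c.natAbs
decreasing_by simpa only [sub_eq_add_neg, neg_mul] using hlt'

end Sqrt3Group

theorem closure_eq_sqrt3Group_three
    (A₁ A₂ A₃ : Matrix.SpecialLinearGroup (Fin 2) ℝ)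
    (h₁ : (A₁ : Matrix (Fin 2) (Fin 2) ℝ) = !![1, Real.sqrt 3; 0, 1])
    (h₂ : (A₂ : Matrix (Fin 2) (Fin 2) ℝ) = !![-5, 4 * Real.sqrt 3; -3 * Real.sqrt 3, 7])
    (h₃ : (A₃ : Matrix (Fin 2) (Fin 2) ℝ) = !![-2, Real.sqrt 3; -3 * Real.sqrt 3, 4]) :
    Subgroup.closure {(-1 : Matrix.SpecialLinearGroup (Fin 2) ℝ), A₁, A₂, A₃} =
      sqrt3Group 3 := by
  obtain rfl : A₁ = Sqrt3Group.A₁ := Subtype.ext (h₁.trans (by simp [Sqrt3Group.A₁, sqrt3SL]))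
  obtain rfl : A₂ = Sqrt3Group.A₂ := Subtype.ext (h₂.trans (by simp [Sqrt3Group.A₂, sqrt3SL]))
  obtain rfl : A₃ = Sqrt3Group.A₃ := Subtype.ext (h₃.trans (by simp [Sqrt3Group.A₃, sqrt3SL]))
  refine le_antisymm Sqrt3Group.closure_le_sqrt3Group_three fun A hA => ?_
  obtain ⟨a, b, c, d, h, rfl, hc⟩ := mem_sqrt3Group_iff.1 hA
  exact Sqrt3Group.sqrt3SL_mem_closure h hc
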